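/- arXiv:2602.01411 — 4 statements merged into one kernel-verified Lean document; each statement's English description precedes it below -/
import Mathlib

section
/- Let s : ℝ → ℝ be continuous on [1, ∞), differentiable on (1, ∞), with s(u) > 0 for all u ≥ 1 and s(k) − k·s'(k) > 0 for all k > 1; suppose f(k) := s'(k)/(s(k) − k·s'(k)) is strictly decreasing on (1, ∞). Let r, c > 0 satisfy r/c ≥ f(k) for all k > 1. Then the function φ(u) := (r·u + c)/s(u) is strictly increasing on [1, ∞); in particular φ(u) > φ(1) for every u > 1, so φ attains its unique minimum over [1, ∞) at u = 1. -/
/-- High service cost case: if `r/c ≥ f k` for all `k > 1`, then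
`φ u := (r·u + c)/s u` is strictly increasing on `[1, ∞)`; in particular
`φ u > φ 1` for every `u > 1`, so `φ` attains its unique minimum at `u = 1`. -/
theorem stmt_7 (s s' : ℝ → ℝ)
    (hcont : ContinuousOn s (Set.Ici (1 : ℝ)))
    (hderiv : ∀ k > (1 : ℝ), HasDerivAt s (s' k) k)
    (hpos : ∀ u ≥ (1 : ℝ), 0 < s u)
    (hden : ∀ k > (1 : ℝ), 0 < s k - k * s' k)
    (hf : StrictAntiOn (fun k => s' k / (s k - k * s' k)) (Set.Ioi (1 : ℝ)))
    (r c : ℝ) (hr : 0 < r) (hc : 0 < c)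
    (hrc : ∀ k > (1 : ℝ), s' k / (s k - k * s' k) ≤ r / c) :
    StrictMonoOn (fun u => (r * u + c) / s u) (Set.Ici (1 : ℝ)) ∧
    ∀ u > (1 : ℝ), (r * u + c) / s u > (r * 1 + c) / s 1 := by
  set φ : ℝ → ℝ := fun u => (r * u + c) / s u with hφ
  have hφderiv : ∀ x > (1 : ℝ), HasDerivAt φ
      ((r * s x - (r * x + c) * s' x) / (s x) ^ 2) x := by
    intro x hx
    have h1 : HasDerivAt (fun u : ℝ => r * u + c) r x := by
      simpa using ((hasDerivAt_id x).const_mul r).add_const c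
    exact h1.div (hderiv x hx) (ne_of_gt (hpos x hx.le))
  have hnum : ∀ x > (1 : ℝ), 0 ≤ r * s x - (r * x + c) * s' x := by
    intro x hx
    have h := hrc x hx
    rw [div_le_div_iff₀ (hden x hx) hc] at h
    nlinarith [h]
  have hφcont : ContinuousOn φ (Set.Ici (1 : ℝ)) := by
    apply ContinuousOn.div (by fun_prop) hcont
    intro x hx; exact ne_of_gt (hpos x hx)
  have hmono : MonotoneOn φ (Set.Ici (1 : ℝ)) := by
    apply monotoneOn_of_deriv_nonneg (convex_Ici 1) hφcont
    · intro x hx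
      rw [interior_Ici] at hx
      exact (hφderiv x hx).differentiableAt.differentiableWithinAt
    · intro x hx
      rw [interior_Ici] at hx
      rw [(hφderiv x hx).deriv]
      exact div_nonneg (hnum x hx) (sq_nonneg _)
  have hsm : StrictMonoOn φ (Set.Ici (1 : ℝ)) := by
    intro a ha b hb hab
    rcases lt_or_eq_of_le (hmono ha hb hab.le) with h | h
    · exact h
    · exfalso
      -- φ constant on (a, b)
      have ha1 : (1 : ℝ) ≤ a := ha
      have hconst : ∀ x ∈ Set.Ioo a b, φ x = φ a := by
        intro x hx
        have h1 : φ a ≤ φ x := hmono ha (le_trans ha hx.1.le) hx.1.le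
        have h2 : φ x ≤ φ b := hmono (le_trans ha hx.1.le) hb hx.2.le
        rw [← h] at h2
        exact le_antisymm h2 h1
      have key : ∀ x ∈ Set.Ioo a b, (fun k => s' k / (s k - k * s' k)) x = r / c := by
        intro x hx
        have hx1 : (1 : ℝ) < x := lt_of_le_of_lt ha1 hx.1
        have heq : φ =ᶠ[nhds x] fun _ => φ a := by
          filter_upwards [Ioo_mem_nhds hx.1 hx.2] with y hy
          exact hconst y hy
        have hD : HasDerivAt (fun _ : ℝ => φ a)
            ((r * s x - (r * x + c) * s' x) / (s x) ^ 2) x :=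
          (hφderiv x hx1).congr_of_eventuallyEq heq.symm
        have hD0 : (r * s x - (r * x + c) * s' x) / (s x) ^ 2 = 0 :=
          hD.unique (hasDerivAt_const x (φ a))
        have hs2 : (0:ℝ) < (s x) ^ 2 := pow_pos (hpos x hx1.le) 2
        have hnum0 : r * s x - (r * x + c) * s' x = 0 := by
          rcases div_eq_zero_iff.mp hD0 with h0 | h0
          · exact h0
          · exact absurd h0 (ne_of_gt hs2)
        rw [div_eq_div_iff (ne_of_gt (hden x hx1)) (ne_of_gt hc)]
        nlinarith [hnum0]
      obtain ⟨x1, hx1, x2, hx2, hlt⟩ : ∃ x1 ∈ Set.Ioo a b, ∃ x2 ∈ Set.Ioo a b, x1 < x2 := by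
        refine ⟨a + (b - a) / 3, ⟨by linarith, by linarith⟩,
          a + 2 * (b - a) / 3, ⟨by linarith, by linarith⟩, by linarith⟩
      have hm1 : x1 ∈ Set.Ioi (1:ℝ) := lt_of_le_of_lt ha1 hx1.1
      have hm2 : x2 ∈ Set.Ioi (1:ℝ) := lt_of_le_of_lt ha1 hx2.1
      have := hf hm1 hm2 hlt
      rw [key x1 hx1, key x2 hx2] at this
      exact lt_irrefl _ this
  refine ⟨hsm, fun u hu => ?_⟩
  exact hsm (Set.self_mem_Ici) hu.le hu
end

section
/- Let s : ℝ → ℝ be continuous on [1, ∞), differentiable on (1, ∞), with s(u) > 0 for all u ≥ 1 and s(k) − k·s'(k) > 0 for all k > 1; suppose f(k) := s'(k)/(s(k) − k·s'(k)) is strictly decreasing on (1, ∞). Let r, c > 0 and suppose there exists k* > 1 with f(k*) = r/c. Then for every u ∈ [1, ∞) with u ≠ k*, one has (r·u + c)/s(u) > (r·k* + c)/s(k*); i.e., φ(u) := (r·u + c)/s(u) attains its unique global minimum over [1, ∞) at u = k*. -/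
/-!
With `D k := s k - k * s' k > 0`, the derivative of `φ u := (r * u + c) / s u` is
`c * D u * (r / c - f u) / s u ^ 2`. Since `f` is strictly decreasing and `f k* = r / c`, this is
negative on `(1, k*)` and positive on `(k*, ∞)`, so `φ` strictly decreases up to `k*` and strictly
increases after it.
-/

open Set

theorem lt_of_hasDerivAt_neg_of_pos {φ φ' : ℝ → ℝ} {a k : ℝ} (hak : a ≤ k)
    (hcont : ContinuousOn φ (Ici a)) (hderiv : ∀ x ∈ Ioi a, HasDerivAt φ (φ' x) x)
    (hneg : ∀ x ∈ Ioo a k, φ' x < 0) (hpos : ∀ x ∈ Ioi k, 0 < φ' x)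
    {u : ℝ} (hu : a ≤ u) (huk : u ≠ k) : φ k < φ u := by
  rcases huk.lt_or_gt with hlt | hgt
  · have hanti : StrictAntiOn φ (Icc a k) := by
      refine strictAntiOn_of_hasDerivWithinAt_neg (f' := φ') (convex_Icc a k)
        (hcont.mono Icc_subset_Ici_self) (fun x hx ↦ ?_) (fun x hx ↦ ?_) <;>
        rw [interior_Icc] at hx
      · exact (hderiv x hx.1).hasDerivWithinAt
      · exact hneg x hx
    exact hanti ⟨hu, hlt.le⟩ ⟨hak, le_rfl⟩ hlt
  · have hmono : StrictMonoOn φ (Ici k) := by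
      refine strictMonoOn_of_hasDerivWithinAt_pos (f' := φ') (convex_Ici k)
        (hcont.mono (Ici_subset_Ici.mpr hak)) (fun x hx ↦ ?_) (fun x hx ↦ ?_) <;>
        rw [interior_Ici] at hx
      · exact (hderiv x (hak.trans_lt hx)).hasDerivWithinAt
      · exact hpos x hx
    exact hmono self_mem_Ici hgt.le hgt

theorem hasDerivAt_affine_div {s : ℝ → ℝ} {s' x : ℝ} (r c : ℝ) (hs : HasDerivAt s s' x)
    (hsx : s x ≠ 0) :
    HasDerivAt (fun u ↦ (r * u + c) / s u) ((r * s x - (r * x + c) * s') / s x ^ 2) x := by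
  have hlin : HasDerivAt (fun u : ℝ ↦ r * u + c) r x := by
    simpa using ((hasDerivAt_id x).const_mul r).add_const c
  exact hlin.div hs hsx

theorem affine_div_deriv_numerator_eq {r c S S' x : ℝ} (hc : c ≠ 0) (hD : S - x * S' ≠ 0) :
    r * S - (r * x + c) * S' = c * (S - x * S') * (r / c - S' / (S - x * S')) := by
  field_simp
  ring

theorem stmt_8_general (s s' : ℝ → ℝ)
    (hcont : ContinuousOn s (Set.Ici (1 : ℝ)))
    (hderiv : ∀ k > (1 : ℝ), HasDerivAt s (s' k) k)
    (hpos : ∀ u ≥ (1 : ℝ), 0 < s u)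
    (hden : ∀ k > (1 : ℝ), 0 < s k - k * s' k)
    (hf : StrictAntiOn (fun k => s' k / (s k - k * s' k)) (Set.Ioi (1 : ℝ)))
    (r c : ℝ) (hc : 0 < c)
    (kstar : ℝ) (hkstar : 1 < kstar)
    (hfk : s' kstar / (s kstar - kstar * s' kstar) = r / c) :
    ∀ u ≥ (1 : ℝ), u ≠ kstar →
      (r * u + c) / s u > (r * kstar + c) / s kstar := by
  intro u hu hne
  have hφcont : ContinuousOn (fun u ↦ (r * u + c) / s u) (Ici 1) :=
    (by fun_prop : Continuous fun u : ℝ ↦ r * u + c).continuousOn.div hcont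
      fun x hx ↦ (hpos x hx).ne'
  have hnum : ∀ x > (1 : ℝ), r * s x - (r * x + c) * s' x =
      c * (s x - x * s' x) * (s' kstar / (s kstar - kstar * s' kstar)
        - s' x / (s x - x * s' x)) := fun x hx ↦ by
    rw [hfk]; exact affine_div_deriv_numerator_eq hc.ne' (hden x hx).ne'
  refine lt_of_hasDerivAt_neg_of_pos hkstar.le hφcont
    (fun x hx ↦ hasDerivAt_affine_div r c (hderiv x hx) (hpos x hx.le).ne')
    (fun x hx ↦ ?_) (fun x hx ↦ ?_) hu hne
  · have hx1 : 1 < x := hx.1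
    rw [hnum x hx1]
    exact div_neg_of_neg_of_pos (mul_neg_of_pos_of_neg (mul_pos hc (hden x hx1))
      (sub_neg.mpr (hf hx1 hkstar hx.2))) (pow_pos (hpos x hx1.le) 2)
  · have hx1 : 1 < x := hkstar.trans hx
    rw [hnum x hx1]
    exact div_pos (mul_pos (mul_pos hc (hden x hx1))
      (sub_pos.mpr (hf hkstar hx1 hx))) (pow_pos (hpos x hx1.le) 2)

/-- Low service cost case: if `f k* = r/c` for some `k* > 1`, then
`φ u := (r·u + c)/s u` attains its unique global minimum over `[1, ∞)` at `u = k*`. -/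
theorem stmt_8 (s s' : ℝ → ℝ)
    (hcont : ContinuousOn s (Set.Ici (1 : ℝ)))
    (hderiv : ∀ k > (1 : ℝ), HasDerivAt s (s' k) k)
    (hpos : ∀ u ≥ (1 : ℝ), 0 < s u)
    (hden : ∀ k > (1 : ℝ), 0 < s k - k * s' k)
    (hf : StrictAntiOn (fun k => s' k / (s k - k * s' k)) (Set.Ioi (1 : ℝ)))
    (r c : ℝ) (hr : 0 < r) (hc : 0 < c)
    (kstar : ℝ) (hkstar : 1 < kstar)
    (hfk : s' kstar / (s kstar - kstar * s' kstar) = r / c) :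
    ∀ u ≥ (1 : ℝ), u ≠ kstar →
      (r * u + c) / s u > (r * kstar + c) / s kstar :=
  stmt_8_general s s' hcont hderiv hpos hden hf r c hc kstar hkstar hfk
end

section
/- Let m ≥ 1, and for each i ∈ {1, …, m} let s_i : ℝ → ℝ be continuous and strictly increasing on [1, ∞) with s_i(u) > 0 for all u ≥ 1; let λ_i, c_i, x_i > 0, set λ := Σ_{i=1}^m λ_i, and let n > 0. Suppose k = (k_1, …, k_m) with each k_i ≥ 1 satisfies Σ_{i=1}^m λ_i·x_i·k_i/s_i(k_i) < n (strict inequality). Then k is not optimal for the Relaxed optimization: there exists k' = (k'_1, …, k'_m) with each k'_i ≥ 1, Σ_{i=1}^m λ_i·x_i·k'_i/s_i(k'_i) ≤ n, and Σ_{i=1}^m (λ_i/λ)·c_i·x_i/s_i(k'_i) < Σ_{i=1}^m (λ_i/λ)·c_i·x_i/s_i(k_i). Consequently, every optimal solution satisfies Σ_{i=1}^m λ_i·x_i·k_i/s_i(k_i) = n. -/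
/-!
If the load constraint is slack, increase the allocation of a single class `j`. Its speed
`s j` strictly increases, so its cost term strictly decreases, while its load term
`λ_j x_j k_j / s_j(k_j)` grows by at most what it would if `s_j` stayed at its old value;
that growth is linear in `k_j`, so a suitable increment uses up no more than the slack.
-/

open Finset Function Set

theorem Finset.sum_apply_update_add {ι α M : Type*} [Fintype ι] [DecidableEq ι] [AddCommMonoid M]
    (g : ι → α → M) (k : ι → α) (j : ι) (v : α) :
    ∑ i, g i (update k j v i) + g j (k j) = ∑ i, g i (k i) + g j v := by
  rw [sum_congr rfl fun i _ ↦ apply_update g k j v i, sum_update_of_mem (mem_univ j),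
    sum_eq_sum_sdiff_singleton_add (mem_univ j)]
  abel

namespace RelaxedAllocation

variable {ι : Type*} [Fintype ι] [DecidableEq ι]
  (lam c x : ι → ℝ) (s : ι → ℝ → ℝ)

noncomputable def load (k : ι → ℝ) : ℝ := ∑ i, lam i * x i * k i / s i (k i)

noncomputable def cost (k : ι → ℝ) : ℝ := ∑ i, lam i / (∑ j, lam j) * (c i * x i / s i (k i))

def feasible (n : ℝ) : Set (ι → ℝ) := {k | (∀ i, 1 ≤ k i) ∧ load lam x s k ≤ n}

variable {lam c x s}

theorem cost_update_lt {k : ι → ℝ} {j : ι} {v : ℝ} (hlam : ∀ i, 0 < lam i) (hc : 0 < c j)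
    (hx : 0 < x j) (hmono : StrictMonoOn (s j) (Ici 1)) (hpos : 0 < s j (k j)) (hk : 1 ≤ k j)
    (hv : k j < v) : cost lam c x s (update k j v) < cost lam c x s k := by
  have hs : s j (k j) < s j v := hmono hk (le_trans hk hv.le) hv
  have hweight : 0 < lam j / ∑ i, lam i :=
    div_pos (hlam j) (sum_pos (fun i _ ↦ hlam i) ⟨j, mem_univ j⟩)
  have hterm : lam j / (∑ i, lam i) * (c j * x j / s j v) <
      lam j / (∑ i, lam i) * (c j * x j / s j (k j)) :=
    mul_lt_mul_of_pos_left (div_lt_div_of_pos_left (mul_pos hc hx) hpos hs) hweight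
  have := sum_apply_update_add (fun i u ↦ lam i / (∑ i, lam i) * (c i * x i / s i u)) k j v
  unfold cost
  linarith

theorem load_update_le {k : ι → ℝ} {j : ι} {n : ℝ} (hlam : 0 < lam j) (hx : 0 < x j)
    (hmono : MonotoneOn (s j) (Ici 1)) (hpos : 0 < s j (k j)) (hk : 1 ≤ k j)
    (hload : load lam x s k ≤ n) :
    load lam x s (update k j (k j + (n - load lam x s k) * s j (k j) / (lam j * x j))) ≤ n := by
  set v := k j + (n - load lam x s k) * s j (k j) / (lam j * x j)
  have hkv : k j ≤ v := le_add_of_nonneg_right (by have := sub_nonneg.2 hload; positivity)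
  have hterm : lam j * x j * v / s j v ≤ lam j * x j * v / s j (k j) :=
    div_le_div_of_nonneg_left (by have : 0 ≤ v := (by linarith); positivity) hpos
      (hmono hk (le_trans hk hkv) hkv)
  have hstep : lam j * x j * v / s j (k j) =
      lam j * x j * k j / s j (k j) + (n - load lam x s k) := by
    simp only [v]
    field_simp
  have := sum_apply_update_add (fun i u ↦ lam i * x i * u / s i u) k j v
  unfold load at *
  linarith

theorem exists_cost_lt_of_load_lt [Nonempty ι] {k : ι → ℝ} {n : ℝ} (hlam : ∀ i, 0 < lam i)
    (hc : ∀ i, 0 < c i) (hx : ∀ i, 0 < x i) (hmono : ∀ i, StrictMonoOn (s i) (Ici 1))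
    (hpos : ∀ i, ∀ u ≥ (1 : ℝ), 0 < s i u) (hk : ∀ i, 1 ≤ k i) (hslack : load lam x s k < n) :
    ∃ k' ∈ feasible lam x s n, cost lam c x s k' < cost lam c x s k := by
  obtain ⟨j⟩ := ‹Nonempty ι›
  have hsj := hpos j (k j) (hk j)
  set v := k j + (n - load lam x s k) * s j (k j) / (lam j * x j)
  have hkv : k j < v := lt_add_of_pos_right _ <| by
    have := sub_pos.2 hslack; have := hlam j; have := hx j; positivity
  refine ⟨update k j v, ⟨fun i ↦ ?_, load_update_le (hlam j) (hx j) (hmono j).monotoneOn hsj (hk j)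
    hslack.le⟩, cost_update_lt hlam (hc j) (hx j) (hmono j) hsj (hk j) hkv⟩
  rcases eq_or_ne i j with rfl | hij
  · simpa using (hk i).trans hkv.le
  · simpa [hij] using hk i

theorem load_eq_of_isMinOn [Nonempty ι] {kopt : ι → ℝ} {n : ℝ} (hlam : ∀ i, 0 < lam i)
    (hc : ∀ i, 0 < c i) (hx : ∀ i, 0 < x i) (hmono : ∀ i, StrictMonoOn (s i) (Ici 1))
    (hpos : ∀ i, ∀ u ≥ (1 : ℝ), 0 < s i u) (hfeas : kopt ∈ feasible lam x s n)
    (hopt : IsMinOn (cost lam c x s) (feasible lam x s n) kopt) : load lam x s kopt = n := by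
  refine hfeas.2.eq_of_not_lt fun hslack ↦ ?_
  obtain ⟨k', hk', hlt⟩ := exists_cost_lt_of_load_lt hlam hc hx hmono hpos hfeas.1 hslack
  exact not_lt_of_ge (hopt hk') hlt

end RelaxedAllocation

theorem stmt_10_general (m : ℕ) (hm : 1 ≤ m) (s : Fin m → ℝ → ℝ)
    (hmono : ∀ i, StrictMonoOn (s i) (Set.Ici (1 : ℝ)))
    (hpos : ∀ i, ∀ u ≥ (1 : ℝ), 0 < s i u)
    (lam c x : Fin m → ℝ)
    (hlam : ∀ i, 0 < lam i) (hc : ∀ i, 0 < c i) (hx : ∀ i, 0 < x i)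
    (n : ℝ)
    (k : Fin m → ℝ) (hk : ∀ i, 1 ≤ k i)
    (hslack : ∑ i, lam i * x i * k i / s i (k i) < n) :
    (∃ k' : Fin m → ℝ, (∀ i, 1 ≤ k' i) ∧
      (∑ i, lam i * x i * k' i / s i (k' i)) ≤ n ∧
      ∑ i, lam i / (∑ j, lam j) * (c i * x i / s i (k' i)) <
        ∑ i, lam i / (∑ j, lam j) * (c i * x i / s i (k i))) ∧
    (∀ kopt : Fin m → ℝ, (∀ i, 1 ≤ kopt i) →
      (∑ i, lam i * x i * kopt i / s i (kopt i)) ≤ n →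
      (∀ k'' : Fin m → ℝ, (∀ i, 1 ≤ k'' i) →
        (∑ i, lam i * x i * k'' i / s i (k'' i)) ≤ n →
        ∑ i, lam i / (∑ j, lam j) * (c i * x i / s i (kopt i)) ≤
          ∑ i, lam i / (∑ j, lam j) * (c i * x i / s i (k'' i))) →
      ∑ i, lam i * x i * kopt i / s i (kopt i) = n) := by
  have : Nonempty (Fin m) := ⟨⟨0, hm⟩⟩
  refine ⟨?_, fun kopt hkopt hle hopt ↦ ?_⟩
  · obtain ⟨k', ⟨hk', hle'⟩, hlt⟩ :=
      RelaxedAllocation.exists_cost_lt_of_load_lt hlam hc hx hmono hpos hk hslack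
    exact ⟨k', hk', hle', hlt⟩
  · exact RelaxedAllocation.load_eq_of_isMinOn hlam hc hx hmono hpos ⟨hkopt, hle⟩
      fun k'' hk'' ↦ hopt k'' hk''.1 hk''.2

/-- If the resource constraint is slack at a feasible point `k`, then `k` is not
optimal for the Relaxed problem: a strictly better feasible `k'` exists.
Consequently, every optimal solution has a tight resource constraint. -/
theorem stmt_10 (m : ℕ) (hm : 1 ≤ m) (s : Fin m → ℝ → ℝ)
    (hcont : ∀ i, ContinuousOn (s i) (Set.Ici (1 : ℝ)))
    (hmono : ∀ i, StrictMonoOn (s i) (Set.Ici (1 : ℝ)))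
    (hpos : ∀ i, ∀ u ≥ (1 : ℝ), 0 < s i u)
    (lam c x : Fin m → ℝ)
    (hlam : ∀ i, 0 < lam i) (hc : ∀ i, 0 < c i) (hx : ∀ i, 0 < x i)
    (n : ℝ) (hn : 0 < n)
    (k : Fin m → ℝ) (hk : ∀ i, 1 ≤ k i)
    (hslack : ∑ i, lam i * x i * k i / s i (k i) < n) :
    (∃ k' : Fin m → ℝ, (∀ i, 1 ≤ k' i) ∧
      (∑ i, lam i * x i * k' i / s i (k' i)) ≤ n ∧
      ∑ i, lam i / (∑ j, lam j) * (c i * x i / s i (k' i)) <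
        ∑ i, lam i / (∑ j, lam j) * (c i * x i / s i (k i))) ∧
    (∀ kopt : Fin m → ℝ, (∀ i, 1 ≤ kopt i) →
      (∑ i, lam i * x i * kopt i / s i (kopt i)) ≤ n →
      (∀ k'' : Fin m → ℝ, (∀ i, 1 ≤ k'' i) →
        (∑ i, lam i * x i * k'' i / s i (k'' i)) ≤ n →
        ∑ i, lam i / (∑ j, lam j) * (c i * x i / s i (kopt i)) ≤
          ∑ i, lam i / (∑ j, lam j) * (c i * x i / s i (k'' i))) →
      ∑ i, lam i * x i * kopt i / s i (kopt i) = n) :=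
  stmt_10_general m hm s hmono hpos lam c x hlam hc hx n k hk hslack
end

section
/- Let m ≥ 1. For each i ∈ {1, …, m}, let s_i : ℝ → ℝ be continuous on [1, ∞) and differentiable on (1, ∞), with s_i(1) = 1, s_i(u) > 0 for u ≥ 1, and s_i(k) − k·s_i'(k) > 0 for all k > 1; let f_i(k) := s_i'(k)/(s_i(k) − k·s_i'(k)), and assume f_i is continuous and strictly decreasing on (1, ∞) with lim_{k→∞} f_i(k) = 0, and that lim_{k→∞} k/s_i(k) = ∞. Let λ_i, c_i, x_i > 0 and let n > Σ_{i=1}^m λ_i·x_i. Then there exist a unique ℓ* > 0 and a unique vector k* = (k*_1, …, k*_m) with each k*_i ≥ 1 such that: (i) for each i, either (k*_i > 1 and c_i·f_i(k*_i) = ℓ*) or (k*_i = 1 and ℓ* ≥ c_i·f_i(k) for all k > 1); and (ii) Σ_{i=1}^m λ_i·x_i·k*_i/s_i(k*_i) = n. -/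
/-!
At a price `ℓ > 0` class `i` demands the unique `k > 1` with `cᵢ fᵢ(k) = ℓ`, or `k = 1` when `ℓ`
dominates `cᵢ fᵢ`. Because `cᵢ fᵢ` is continuous, strictly decreasing and vanishes at infinity,
this demand is continuous and antitone in `ℓ`, tends to `∞` as `ℓ → 0⁺` and to `1` as `ℓ → ∞`.
Since `k / sᵢ(k)` is strictly increasing (its derivative is `(sᵢ - k sᵢ') / sᵢ²`), the load
`ℓ ↦ ∑ λᵢ xᵢ kᵢ(ℓ) / sᵢ(kᵢ(ℓ))` is continuous, tends to `∞` at `0⁺` and to `∑ λᵢ xᵢ < n` at `∞`,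
so it takes the value `n`. It is strictly decreasing wherever it exceeds `∑ λᵢ xᵢ`, which makes
`ℓ*` unique, and `ℓ*` determines `k*`.
-/

open Set Filter Topology

theorem StrictAntiOn.lt_of_tendsto {f : ℝ → ℝ} {a b : ℝ} (hf : StrictAntiOn f (Ioi a))
    (hlim : Tendsto f atTop (𝓝 b)) {k : ℝ} (hk : a < k) : b < f k := by
  have hk' : a < k + 1 := by linarith
  have hb : b ≤ f (k + 1) := le_of_tendsto hlim <| by
    filter_upwards [eventually_ge_atTop (k + 1)] with y hy
    exact hf.antitoneOn hk' (hk'.trans_le hy) hy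
  exact hb.trans_lt (hf hk hk' (lt_add_one k))

theorem strictMonoOn_id_div {s s' : ℝ → ℝ} {a : ℝ} (hs : ContinuousOn s (Ici a))
    (hderiv : ∀ k > a, HasDerivAt s (s' k) k) (hpos : ∀ k ≥ a, 0 < s k)
    (hden : ∀ k > a, 0 < s k - k * s' k) : StrictMonoOn (fun k => k / s k) (Ici a) := by
  refine strictMonoOn_of_deriv_pos (convex_Ici a)
    (continuousOn_id.div hs fun k hk => (hpos k hk).ne') fun k hk => ?_
  rw [interior_Ici] at hk
  have hd : HasDerivAt (fun k => k / s k) ((1 * s k - k * s' k) / s k ^ 2) k :=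
    (hasDerivAt_id' k).div (hderiv k hk) (hpos k hk.le).ne'
  rw [hd.deriv, one_mul]
  exact div_pos (hden k hk) (pow_pos (hpos k hk.le) 2)

structure IsMarginalValue (F : ℝ → ℝ) : Prop where
  continuousOn : ContinuousOn F (Ioi 1)
  strictAntiOn : StrictAntiOn F (Ioi 1)
  tendsto_atTop : Tendsto F atTop (𝓝 0)

lemma IsMarginalValue.pos {F : ℝ → ℝ} (hF : IsMarginalValue F) {k : ℝ} (hk : 1 < k) :
    0 < F k :=
  hF.strictAntiOn.lt_of_tendsto hF.tendsto_atTop hk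

open Classical in
noncomputable def demand (F : ℝ → ℝ) (ℓ : ℝ) : ℝ :=
  if h : ∃ k, 1 < k ∧ F k = ℓ then h.choose else 1

def IsDemand (F : ℝ → ℝ) (ℓ k : ℝ) : Prop :=
  (1 < k ∧ F k = ℓ) ∨ (k = 1 ∧ ∀ k' > 1, F k' ≤ ℓ)

section demand

variable {F : ℝ → ℝ} {ℓ ℓ₁ ℓ₂ k : ℝ}

lemma one_le_demand (F : ℝ → ℝ) (ℓ : ℝ) : 1 ≤ demand F ℓ := by
  unfold demand
  split_ifs with h
  exacts [h.choose_spec.1.le, le_rfl]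

lemma apply_demand_eq (h : 1 < demand F ℓ) : F (demand F ℓ) = ℓ := by
  unfold demand at *
  split_ifs at * with h'
  exacts [h'.choose_spec.2, absurd h (lt_irrefl 1)]

lemma demand_apply_eq (hFa : StrictAntiOn F (Ioi 1)) (hk : 1 < k) : demand F (F k) = k := by
  have h : ∃ k', 1 < k' ∧ F k' = F k := ⟨k, hk, rfl⟩
  rw [demand, dif_pos h]
  exact hFa.injOn h.choose_spec.1 hk h.choose_spec.2

lemma lt_demand_iff (hF : IsMarginalValue F) (hk : 1 < k) (hℓ : 0 < ℓ) :
    k < demand F ℓ ↔ ℓ < F k := by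
  constructor
  · intro hlt
    rw [← apply_demand_eq (hk.trans hlt)]
    exact hF.strictAntiOn hk (hk.trans hlt) hlt
  · intro hlt
    obtain ⟨K, hK0, hKk⟩ :=
      ((hF.tendsto_atTop.eventually (Iio_mem_nhds hℓ)).and (eventually_ge_atTop k)).exists
    obtain ⟨k', hk', rfl⟩ := intermediate_value_Icc' hKk
      (hF.continuousOn.mono fun y hy => hk.trans_le hy.1) ⟨hK0.le, hlt.le⟩
    rw [demand_apply_eq hF.strictAntiOn (hk.trans_le hk'.1)]
    exact hk'.1.lt_of_ne (by rintro rfl; exact lt_irrefl _ hlt)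

lemma demand_le_iff (hF : IsMarginalValue F) (hk : 1 < k) (hℓ : 0 < ℓ) :
    demand F ℓ ≤ k ↔ F k ≤ ℓ := by
  simpa only [not_lt] using (lt_demand_iff hF hk hℓ).not

lemma isDemand_iff_eq_demand (hF : IsMarginalValue F) (hℓ : 0 < ℓ) :
    IsDemand F ℓ k ↔ k = demand F ℓ := by
  constructor
  · rintro (⟨hk, rfl⟩ | ⟨rfl, hle⟩)
    · exact (demand_apply_eq hF.strictAntiOn hk).symm
    · exact (one_le_demand F ℓ).antisymm
        (le_of_forall_gt_imp_ge_of_dense fun k' hk' => (demand_le_iff hF hk' hℓ).2 (hle k' hk'))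
  · rintro rfl
    rcases (one_le_demand F ℓ).lt_or_eq with h | h
    · exact .inl ⟨h, apply_demand_eq h⟩
    · exact .inr ⟨h.symm, fun k' hk' => (demand_le_iff hF hk' hℓ).1 (h ▸ hk'.le)⟩

lemma antitoneOn_demand (hF : IsMarginalValue F) : AntitoneOn (demand F) (Ioi 0) := by
  intro ℓ₁ h₁ ℓ₂ h₂ h₁₂
  by_contra! hlt
  obtain ⟨k, hk₁, hk₂⟩ := exists_between hlt
  have hk : 1 < k := (one_le_demand F ℓ₁).trans_lt hk₁
  have hℓ₂ : ℓ₂ < F k := (lt_demand_iff hF hk h₂).1 hk₂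
  have hℓ₁ : F k ≤ ℓ₁ := (demand_le_iff hF hk h₁).1 hk₁.le
  exact h₁₂.not_gt (hℓ₂.trans_le hℓ₁)

lemma demand_lt_demand (hF : IsMarginalValue F) (h₁ : 0 < ℓ₁) (h₁₂ : ℓ₁ < ℓ₂)
    (h : 1 < demand F ℓ₁) : demand F ℓ₂ < demand F ℓ₁ := by
  refine (antitoneOn_demand hF h₁ (h₁.trans h₁₂) h₁₂.le).lt_of_ne fun heq =>
    h₁₂.ne ?_
  have h₂ : 1 < demand F ℓ₂ := heq ▸ h
  rw [← apply_demand_eq h, ← apply_demand_eq h₂, heq]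

lemma continuousOn_demand (hF : IsMarginalValue F) : ContinuousOn (demand F) (Ioi 0) := by
  refine continuousOn_of_forall_continuousAt fun a (ha : 0 < a) => ?_
  rw [ContinuousAt, tendsto_order]
  refine ⟨fun b hb => ?_, fun b hb => ?_⟩
  · rcases lt_or_ge b 1 with hb₁ | hb₁
    · exact .of_forall fun ℓ => hb₁.trans_le (one_le_demand F ℓ)
    obtain ⟨k, hbk, hka⟩ := exists_between hb
    have hk : 1 < k := hb₁.trans_lt hbk
    filter_upwards [gt_mem_nhds ((lt_demand_iff hF hk ha).1 hka), lt_mem_nhds ha]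
      with ℓ hℓ hℓ₀
    exact hbk.trans ((lt_demand_iff hF hk hℓ₀).2 hℓ)
  · obtain ⟨k₂, hak₂, hk₂b⟩ := exists_between hb
    obtain ⟨k₁, hak₁, hk₁₂⟩ := exists_between hak₂
    have hk₁ : 1 < k₁ := (one_le_demand F a).trans_lt hak₁
    have hk₂ : 1 < k₂ := hk₁.trans hk₁₂
    have hFk₂ : F k₂ < a :=
      (hF.strictAntiOn hk₁ hk₂ hk₁₂).trans_le ((demand_le_iff hF hk₁ ha).1 hak₁.le)
    filter_upwards [lt_mem_nhds hFk₂] with ℓ hℓ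
    exact ((demand_le_iff hF hk₂ ((hF.pos hk₂).trans hℓ)).2 hℓ.le).trans_lt hk₂b

lemma tendsto_demand_atTop (hF : IsMarginalValue F) : Tendsto (demand F) atTop (𝓝 1) := by
  rw [tendsto_order]
  refine ⟨fun b hb => .of_forall fun ℓ => hb.trans_le (one_le_demand F ℓ), fun b hb => ?_⟩
  obtain ⟨k, hk, hkb⟩ := exists_between hb
  filter_upwards [eventually_gt_atTop (F k)] with ℓ hℓ
  exact ((demand_le_iff hF hk ((hF.pos hk).trans hℓ)).2 hℓ.le).trans_lt hkb

lemma tendsto_demand_nhdsGT_zero (hF : IsMarginalValue F) :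
    Tendsto (demand F) (𝓝[>] 0) atTop := by
  refine Filter.tendsto_atTop.2 fun b => ?_
  have hk : 1 < max b 2 := lt_max_of_lt_right one_lt_two
  filter_upwards [Ioo_mem_nhdsGT (hF.pos hk)] with ℓ hℓ
  exact (le_max_left b 2).trans ((lt_demand_iff hF hk hℓ.1).2 hℓ.2).le

end demand

section load

variable {ι : Type*} [Fintype ι] {w : ι → ℝ} {φ F : ι → ℝ → ℝ}

noncomputable def load (w : ι → ℝ) (φ F : ι → ℝ → ℝ) (ℓ : ℝ) : ℝ :=
  ∑ i, w i * φ i (demand (F i) ℓ)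

lemma continuousOn_load (hF : ∀ i, IsMarginalValue (F i))
    (hφ : ∀ i, ContinuousOn (φ i) (Ici 1)) : ContinuousOn (load w φ F) (Ioi 0) :=
  continuousOn_finsetSum _ fun i _ => continuousOn_const.mul <|
    (hφ i).comp (continuousOn_demand (hF i)) fun ℓ _ => one_le_demand (F i) ℓ

lemma tendsto_load_atTop (hF : ∀ i, IsMarginalValue (F i))
    (hφ : ∀ i, ContinuousOn (φ i) (Ici 1)) (hφ₁ : ∀ i, φ i 1 = 1) :
    Tendsto (load w φ F) atTop (𝓝 (∑ i, w i)) := by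
  refine tendsto_finsetSum _ fun i _ => ?_
  have hdemand : Tendsto (demand (F i)) atTop (𝓝[Ici 1] 1) :=
    tendsto_nhdsWithin_iff.2 ⟨tendsto_demand_atTop (hF i), .of_forall (one_le_demand (F i))⟩
  simpa [hφ₁ i] using (((hφ i) 1 self_mem_Ici).tendsto.comp hdemand).const_mul (w i)

lemma tendsto_load_nhdsGT_zero [Nonempty ι] (hF : ∀ i, IsMarginalValue (F i))
    (hφ : ∀ i, MonotoneOn (φ i) (Ici 1)) (hφ₁ : ∀ i, φ i 1 = 1)
    (hφ_top : ∀ i, Tendsto (φ i) atTop atTop) (hw : ∀ i, 0 < w i) :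
    Tendsto (load w φ F) (𝓝[>] 0) atTop := by
  let i₀ := Classical.arbitrary ι
  have hterm_nonneg (i : ι) (ℓ : ℝ) : 0 ≤ w i * φ i (demand (F i) ℓ) := by
    refine mul_nonneg (hw i).le (zero_le_one.trans ?_)
    rw [← hφ₁ i]
    exact hφ i self_mem_Ici (one_le_demand _ _) (one_le_demand _ _)
  refine tendsto_atTop_mono (fun ℓ => ?_)
    (((hφ_top i₀).comp (tendsto_demand_nhdsGT_zero (hF i₀))).const_mul_atTop (hw i₀))
  exact Finset.single_le_sum (fun i _ => hterm_nonneg i ℓ) (Finset.mem_univ i₀)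

lemma load_lt_load (hF : ∀ i, IsMarginalValue (F i))
    (hφ : ∀ i, StrictMonoOn (φ i) (Ici 1)) (hφ₁ : ∀ i, φ i 1 = 1) (hw : ∀ i, 0 < w i)
    {ℓ₁ ℓ₂ : ℝ} (h₁ : 0 < ℓ₁) (h₁₂ : ℓ₁ < ℓ₂)
    (hload : ∑ i, w i < load w φ F ℓ₁) : load w φ F ℓ₂ < load w φ F ℓ₁ := by
  obtain ⟨j, hj⟩ : ∃ j, 1 < demand (F j) ℓ₁ := by
    by_contra! h
    refine hload.ne (Finset.sum_congr rfl fun i _ => ?_).symm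
    rw [(h i).antisymm (one_le_demand _ _), hφ₁ i, mul_one]
  refine Finset.sum_lt_sum (fun i _ => ?_) ⟨j, Finset.mem_univ j, ?_⟩
  · exact mul_le_mul_of_nonneg_left ((hφ i).monotoneOn (one_le_demand _ _)
      (one_le_demand _ _) (antitoneOn_demand (hF i) h₁ (h₁.trans h₁₂) h₁₂.le)) (hw i).le
  · exact mul_lt_mul_of_pos_left ((hφ j) (one_le_demand _ _) (one_le_demand _ _)
      (demand_lt_demand (hF j) h₁ h₁₂ hj)) (hw j)

lemma existsUnique_load_eq [Nonempty ι] (hF : ∀ i, IsMarginalValue (F i))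
    (hφc : ∀ i, ContinuousOn (φ i) (Ici 1)) (hφm : ∀ i, StrictMonoOn (φ i) (Ici 1))
    (hφ₁ : ∀ i, φ i 1 = 1) (hφ_top : ∀ i, Tendsto (φ i) atTop atTop) (hw : ∀ i, 0 < w i)
    {n : ℝ} (hn : ∑ i, w i < n) : ∃! ℓ, 0 < ℓ ∧ load w φ F ℓ = n := by
  obtain ⟨ℓ₀, hℓ₀n, hℓ₀⟩ := (((tendsto_load_nhdsGT_zero hF
    (fun i => (hφm i).monotoneOn) hφ₁ hφ_top hw).eventually_gt_atTop n).and
    self_mem_nhdsWithin).exists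
  obtain ⟨ℓ₁, hℓ₁n, hℓ₀₁⟩ := (((tendsto_load_atTop hF hφc hφ₁).eventually
    (gt_mem_nhds hn)).and (eventually_ge_atTop ℓ₀)).exists
  obtain ⟨ℓ, hℓ, hℓn⟩ := intermediate_value_Icc' hℓ₀₁
    ((continuousOn_load hF hφc).mono fun x hx => lt_of_lt_of_le hℓ₀ hx.1)
    ⟨hℓ₁n.le, hℓ₀n.le⟩
  have hℓpos : 0 < ℓ := lt_of_lt_of_le hℓ₀ hℓ.1
  have no_lt {a b : ℝ} (ha : 0 < a) (hA : load w φ F a = n) (hB : load w φ F b = n) :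
      ¬a < b := fun hab =>
    (load_lt_load hF hφm hφ₁ hw ha hab (hA ▸ hn)).ne (hB.trans hA.symm)
  refine ⟨ℓ, ⟨hℓpos, hℓn⟩, fun ℓ' ⟨hℓ', hℓ'n⟩ => ?_⟩
  exact le_antisymm (not_lt.1 (no_lt hℓpos hℓn hℓ'n)) (not_lt.1 (no_lt hℓ' hℓ'n hℓn))

end load

/-- Existence and uniqueness of the market-clearing service cost `ℓ*` and per-class
allocation `k*` at the WHAM mean field stationary point: each `k*ᵢ` is either the
unique solution of `cᵢ · fᵢ(k) = ℓ*` above 1, or equal to 1 when the price `ℓ*`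
dominates `cᵢ · fᵢ` everywhere, and the total effective load equals `n`. -/
theorem stmt_12 (m : ℕ) (hm : 1 ≤ m) (s s' : Fin m → ℝ → ℝ)
    (hcont : ∀ i, ContinuousOn (s i) (Set.Ici (1 : ℝ)))
    (hderiv : ∀ i, ∀ k > (1 : ℝ), HasDerivAt (s i) (s' i k) k)
    (hone : ∀ i, s i 1 = 1)
    (hpos : ∀ i, ∀ u ≥ (1 : ℝ), 0 < s i u)
    (hden : ∀ i, ∀ k > (1 : ℝ), 0 < s i k - k * s' i k)
    (hfcont : ∀ i,
      ContinuousOn (fun k => s' i k / (s i k - k * s' i k)) (Set.Ioi (1 : ℝ)))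
    (hfanti : ∀ i,
      StrictAntiOn (fun k => s' i k / (s i k - k * s' i k)) (Set.Ioi (1 : ℝ)))
    (hflim : ∀ i, Filter.Tendsto (fun k => s' i k / (s i k - k * s' i k))
      Filter.atTop (nhds 0))
    (hklim : ∀ i, Filter.Tendsto (fun k => k / s i k) Filter.atTop Filter.atTop)
    (lam c x : Fin m → ℝ)
    (hlam : ∀ i, 0 < lam i) (hc : ∀ i, 0 < c i) (hx : ∀ i, 0 < x i)
    (n : ℝ) (hn : (∑ i, lam i * x i) < n) :
    ∃! p : ℝ × (Fin m → ℝ),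
      0 < p.1 ∧ (∀ i, 1 ≤ p.2 i) ∧
      (∀ i,
        (1 < p.2 i ∧
          c i * (s' i (p.2 i) / (s i (p.2 i) - p.2 i * s' i (p.2 i))) = p.1) ∨
        (p.2 i = 1 ∧
          ∀ k > (1 : ℝ), p.1 ≥ c i * (s' i k / (s i k - k * s' i k)))) ∧
      (∑ i, lam i * x i * p.2 i / s i (p.2 i)) = n := by
  set F : Fin m → ℝ → ℝ := fun i k => c i * (s' i k / (s i k - k * s' i k))
  have hF (i : Fin m) : IsMarginalValue (F i) :=
    ⟨continuousOn_const.mul (hfcont i),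
      fun a ha b hb hab => mul_lt_mul_of_pos_left (hfanti i ha hb hab) (hc i),
      by simpa using (hflim i).const_mul (c i)⟩
  have : Nonempty (Fin m) := ⟨⟨0, hm⟩⟩
  obtain ⟨ℓ, ⟨hℓ, hload⟩, huniq⟩ :=
    existsUnique_load_eq (w := fun i => lam i * x i) (φ := fun i k => k / s i k) hF
    (fun i => continuousOn_id.div (hcont i) fun k hk => (hpos i k hk).ne')
    (fun i => strictMonoOn_id_div (hcont i) (hderiv i) (hpos i) (hden i))
    (fun i => by simp [hone i]) hklim (fun i => mul_pos (hlam i) (hx i)) hn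
  simp only [load, ← mul_div_assoc] at hload huniq
  refine ⟨(ℓ, fun i => demand (F i) ℓ), ⟨hℓ, fun i => one_le_demand _ _,
    fun i => (isDemand_iff_eq_demand (hF i) hℓ).2 rfl, hload⟩, ?_⟩
  rintro ⟨ℓ', K⟩ ⟨hℓ', -, hK, hsum⟩
  obtain rfl : K = fun i => demand (F i) ℓ' :=
    funext fun i => (isDemand_iff_eq_demand (hF i) hℓ').1 (hK i)
  obtain rfl := huniq ℓ' ⟨hℓ', hsum⟩
  rfl
end
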